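/- Let (X_t)_{t∈ℤ⁺} be adapted to (F_t), X_0 = 0, with increments Δ_t. Fix α ∈ (0,1), β > α. Suppose (i) E[(Δ_t⁻)^β | F_t] ≤ C a.s. for all t, and (ii) uniformly in t and ω, log P[Δ_t⁺ > x | F_t] / log x → −α as x → ∞, a.s. Then (log X_t)/(log t) → 1/α almost surely as t → ∞. -/

import Mathlib

/-!
Write `Δ_t = X_{t+1} - X_t`, so that `X_t = ∑_{s<t} Δ_s`, and combine three almost sure estimates.

* For `p ≤ 1` the map `x ↦ x ^ p` is subadditive, so bounded `p`-th moments of the summands give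
  `E[(∑_{s<n} W_s) ^ p] ≤ n B`. Markov's inequality at the dyadic times `n = 2 ^ (k + 1)` and
  Borel–Cantelli then give `∑_{s<t} W_s ≤ t ^ q` eventually whenever `p q > 1`. With `p = min β 1`
  this controls the negative parts by some `t ^ q`, `q < 1/α`; since the tail bound makes every
  moment of order `p < α` of `Δ_s⁺` bounded, it also gives `∑_{s<t} Δ_s⁺ ≤ t ^ h` for all `h > 1/α`.
* For `r < 1/α` pick `a > α` with `r a < 1`. Given the past, each `Δ_s⁺` exceeds `y ≈ 2 ^ (k r)`
  with probability at least `y ^ (-a)`, so multiplying the conditional bounds over the window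
  `[2 ^ k, 2 ^ (k + 1))` shows that no such jump happens there with probability at most
  `(1 + 2 ^ k y ^ (-a))⁻¹`, which is summable in `k`. Hence eventually `Δ_s⁺ ≥ t ^ r` for some
  `s < t`.

Thus `t ^ r - t ^ q ≤ X_t ≤ t ^ h` eventually for all `r < 1/α < h`, and `log X_t / log t → 1/α`.
-/

open MeasureTheory Filter Set
open scoped ENNReal Topology

open Finset in
lemma Real.rpow_finset_sum_le_sum_rpow {ι : Type*} (s : Finset ι) {f : ι → ℝ}
    (hf : ∀ i ∈ s, 0 ≤ f i) {p : ℝ} (hp : 0 < p) (hp1 : p ≤ 1) :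
    (∑ i ∈ s, f i) ^ p ≤ ∑ i ∈ s, f i ^ p := by
  classical
  induction s using Finset.induction with
  | empty => simp [Real.zero_rpow hp.ne']
  | insert i s hi ih =>
    rw [sum_insert hi, sum_insert hi]
    have hs : ∀ j ∈ s, 0 ≤ f j := fun j hj => hf j (mem_insert_of_mem hj)
    calc (f i + ∑ j ∈ s, f j) ^ p ≤ f i ^ p + (∑ j ∈ s, f j) ^ p :=
          Real.rpow_add_le_add_rpow (hf i (mem_insert_self i s)) (sum_nonneg hs) hp.le hp1
      _ ≤ f i ^ p + ∑ j ∈ s, f j ^ p := by gcongr; exact ih hs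

lemma one_sub_pow_le_inv_one_add_mul {ρ : ℝ} (hρ0 : 0 ≤ ρ) (hρ1 : ρ ≤ 1) (n : ℕ) :
    (1 - ρ) ^ n ≤ (1 + n * ρ)⁻¹ := by
  have hprod : (1 - ρ) ^ n * (1 + ρ) ^ n ≤ 1 := by
    rw [← mul_pow]
    exact pow_le_one₀ (by nlinarith) (by nlinarith)
  have hbern : 1 + n * ρ ≤ (1 + ρ) ^ n := one_add_mul_le_pow (by linarith) n
  rw [← one_div, le_div_iff₀ (by positivity)]
  nlinarith [pow_nonneg (sub_nonneg.2 hρ1) n]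

lemma Nat.tendsto_log_atTop {b : ℕ} (hb : 1 < b) : Tendsto (Nat.log b) atTop atTop :=
  tendsto_atTop_atTop.2 fun k => ⟨b ^ k, fun _ ht => Nat.le_log_of_pow_le hb ht⟩

lemma summable_inv_one_add_two_pow_mul_rpow_neg {c : ℝ} (hc : 0 < c) {r a : ℝ} (hra : r * a < 1) :
    Summable fun k : ℕ => (1 + 2 ^ k * (max c (((2:ℝ) ^ (k + 2)) ^ r)) ^ (-a))⁻¹ := by
  have hratio : (2:ℝ) ^ (r * a) / 2 < 1 := by
    rw [div_lt_one two_pos]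
    simpa using Real.rpow_lt_rpow_of_exponent_lt one_lt_two hra
  refine Summable.of_nonneg_of_le (fun k => by positivity) (fun k => ?_)
    (((summable_geometric_two).mul_left (c ^ a)).add
      ((summable_geometric_of_lt_one (by positivity) hratio).mul_left (4 ^ (r * a))))
  set y := max c (((2:ℝ) ^ (k + 2)) ^ r)
  have hy : 0 < y := lt_max_of_lt_left hc
  calc (1 + 2 ^ k * y ^ (-a))⁻¹ ≤ (2 ^ k * y ^ (-a))⁻¹ :=
        inv_anti₀ (by positivity) (by linarith)
    _ = y ^ a * (1 / 2) ^ k := by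
        rw [Real.rpow_neg hy.le, mul_inv, inv_inv, one_div, inv_pow, mul_comm]
    _ ≤ (c ^ a + 4 ^ (r * a) * ((2:ℝ) ^ (r * a)) ^ k) * (1 / 2) ^ k := by
        gcongr
        have h2 : (((2:ℝ) ^ (k + 2)) ^ r) ^ a = 4 ^ (r * a) * ((2:ℝ) ^ (r * a)) ^ k := by
          rw [← Real.rpow_mul (by positivity), pow_add, Real.mul_rpow (by positivity) (by norm_num),
            Real.rpow_pow_comm zero_le_two, mul_comm]
          norm_num
        obtain hmax | hmax : y = c ∨ y = ((2:ℝ) ^ (k + 2)) ^ r := max_choice _ _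
        · rw [hmax]; exact le_add_of_nonneg_right (by positivity)
        · rw [hmax, h2]; exact le_add_of_nonneg_left (by positivity)
    _ = c ^ a * (1 / 2) ^ k + 4 ^ (r * a) * ((2:ℝ) ^ (r * a) / 2) ^ k := by
        rw [div_eq_mul_one_div _ (2:ℝ), mul_pow]; ring

lemma eventually_rpow_le_rpow_sub_rpow {q r r' : ℝ} (hq : q < r') (hr : r < r') :
    ∀ᶠ t : ℕ in atTop, (t : ℝ) ^ r ≤ (t : ℝ) ^ r' - (t : ℝ) ^ q := by
  set m := max r q
  have hgap : ∀ᶠ t : ℕ in atTop, (2 : ℝ) ≤ (t : ℝ) ^ (r' - m) :=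
    ((tendsto_rpow_atTop (sub_pos.2 (max_lt hr hq))).comp
      tendsto_natCast_atTop_atTop).eventually_ge_atTop 2
  filter_upwards [hgap, eventually_ge_atTop 1] with t ht ht1
  have ht1' : (1 : ℝ) ≤ t := by exact_mod_cast ht1
  have hsplit : (t : ℝ) ^ r' = (t : ℝ) ^ m * (t : ℝ) ^ (r' - m) := by
    rw [← Real.rpow_add (by linarith)]; ring_nf
  have hrm : (t : ℝ) ^ r ≤ (t : ℝ) ^ m := Real.rpow_le_rpow_of_exponent_le ht1' (le_max_left _ _)
  have hqm : (t : ℝ) ^ q ≤ (t : ℝ) ^ m := Real.rpow_le_rpow_of_exponent_le ht1' (le_max_right _ _)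
  have hm0 : 0 ≤ (t : ℝ) ^ m := by positivity
  nlinarith

open Finset in
lemma posPart_sub_sum_negPart_le_sum (d : ℕ → ℝ) {s t : ℕ} (hst : s < t) :
    (d s)⁺ - ∑ u ∈ range t, (d u)⁻ ≤ ∑ u ∈ range t, d u := by
  have hs : (d s)⁺ ≤ ∑ u ∈ range t, (d u)⁺ :=
    single_le_sum (f := fun u => (d u)⁺) (fun u _ => posPart_nonneg _) (mem_range.2 hst)
  calc (d s)⁺ - ∑ u ∈ range t, (d u)⁻ ≤ ∑ u ∈ range t, (d u)⁺ - ∑ u ∈ range t, (d u)⁻ := by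
        linarith
    _ = ∑ u ∈ range t, d u := by
        rw [← sum_sub_distrib]; exact sum_congr rfl fun u _ => posPart_sub_negPart _

lemma tendsto_log_div_log_of_rpow_bounds {f : ℕ → ℝ} {L : ℝ}
    (hlow : ∀ r < L, ∀ᶠ t : ℕ in atTop, (t : ℝ) ^ r ≤ f t)
    (hup : ∀ r > L, ∀ᶠ t : ℕ in atTop, f t ≤ (t : ℝ) ^ r) :
    Tendsto (fun t : ℕ => Real.log (f t) / Real.log t) atTop (𝓝 L) := by
  have hlog : ∀ᶠ t : ℕ in atTop, 0 < Real.log t :=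
    (Real.tendsto_log_atTop.comp tendsto_natCast_atTop_atTop).eventually_gt_atTop 0
  have hpos : ∀ᶠ t : ℕ in atTop, 0 < f t := by
    filter_upwards [hlow (L - 1) (by linarith), eventually_gt_atTop 0] with t ht ht0
    exact (Real.rpow_pos_of_pos (by exact_mod_cast ht0) _).trans_le ht
  refine tendsto_order.2 ⟨fun a ha => ?_, fun b hb => ?_⟩
  · obtain ⟨r, har, hrL⟩ := exists_between ha
    filter_upwards [hlow r hrL, hlog, eventually_gt_atTop 0] with t ht hlogt ht0
    rw [lt_div_iff₀ hlogt]
    calc a * Real.log t < r * Real.log t := by gcongr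
      _ = Real.log ((t : ℝ) ^ r) := (Real.log_rpow (by exact_mod_cast ht0) r).symm
      _ ≤ Real.log (f t) := Real.log_le_log (by positivity) ht
  · obtain ⟨r, hLr, hrb⟩ := exists_between hb
    filter_upwards [hup r hLr, hlog, hpos, eventually_gt_atTop 0] with t ht hlogt hft ht0
    rw [div_lt_iff₀ hlogt]
    calc Real.log (f t) ≤ Real.log ((t : ℝ) ^ r) := Real.log_le_log hft ht
      _ = r * Real.log t := Real.log_rpow (by exact_mod_cast ht0) r
      _ < b * Real.log t := by gcongr

open Finset in
lemma tendsto_log_sum_div_log {d : ℕ → ℝ} {L q : ℝ} (hqL : q < L)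
    (hneg : ∀ᶠ t : ℕ in atTop, ∑ u ∈ range t, (d u)⁻ ≤ (t : ℝ) ^ q)
    (hjump : ∀ r < L, ∀ᶠ t : ℕ in atTop, ∃ s < t, (t : ℝ) ^ r ≤ (d s)⁺)
    (hup : ∀ r > L, ∀ᶠ t : ℕ in atTop, ∑ u ∈ range t, (d u)⁺ ≤ (t : ℝ) ^ r) :
    Tendsto (fun t : ℕ => Real.log (∑ u ∈ range t, d u) / Real.log t) atTop (𝓝 L) := by
  refine tendsto_log_div_log_of_rpow_bounds (fun r hr => ?_) (fun r hr => ?_)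
  · obtain ⟨r', hr', hr'L⟩ := exists_between (max_lt hr hqL)
    filter_upwards [hjump r' hr'L, hneg,
      eventually_rpow_le_rpow_sub_rpow (lt_of_le_of_lt (le_max_right _ _) hr')
        (lt_of_le_of_lt (le_max_left _ _) hr')] with t ⟨s, hst, hs⟩ hneg ht
    linarith [posPart_sub_sum_negPart_le_sum d hst]
  · filter_upwards [hup r hr] with t ht
    exact (sum_le_sum fun u _ => le_posPart (d u)).trans ht

section

variable {Ω : Type _} {m m0 : MeasurableSpace Ω} {μ : Measure Ω}

lemma ae_forall_lt_of_forall_ae {P : ℝ → Ω → Prop} {a L : ℝ} (haL : a < L)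
    (hP : ∀ r r' ω, r ≤ r' → P r' ω → P r ω) (h : ∀ r, a < r → r < L → ∀ᵐ ω ∂μ, P r ω) :
    ∀ᵐ ω ∂μ, ∀ r < L, P r ω := by
  have hq : ∀ᵐ ω ∂μ, ∀ q : ℚ, a < q → (q : ℝ) < L → P q ω := by
    refine ae_all_iff.2 fun q => ?_
    by_cases hq : a < q ∧ (q : ℝ) < L
    · filter_upwards [h q hq.1 hq.2] with ω hω _ _ using hω
    · exact Eventually.of_forall fun ω haq hqL => absurd ⟨haq, hqL⟩ hq
  filter_upwards [hq] with ω hω r hr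
  obtain ⟨q, hq, hqL⟩ := exists_rat_btwn (max_lt haL hr)
  exact hP r q ω (le_of_lt (lt_of_le_of_lt (le_max_right _ _) hq))
    (hω q (lt_of_le_of_lt (le_max_left _ _) hq) hqL)

lemma ae_forall_gt_of_forall_ae {P : ℝ → Ω → Prop} {L : ℝ}
    (hP : ∀ r r' ω, r ≤ r' → P r ω → P r' ω) (h : ∀ r > L, ∀ᵐ ω ∂μ, P r ω) :
    ∀ᵐ ω ∂μ, ∀ r > L, P r ω := by
  have hq : ∀ᵐ ω ∂μ, ∀ q : ℚ, L < q → P q ω :=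
    ae_all_iff.2 fun q => by
      by_cases hq : L < q
      · filter_upwards [h q hq] with ω hω _ using hω
      · exact Eventually.of_forall fun ω hLq => absurd hLq hq
  filter_upwards [hq] with ω hω r hr
  obtain ⟨q, hLq, hqr⟩ := exists_rat_btwn hr
  exact hP q r ω hqr.le (hω q hLq)

lemma ae_eventually_notMem_of_le_ofReal {s : ℕ → Set Ω} {b : ℕ → ℝ} (hb : Summable b)
    (hs : ∀ k, μ (s k) ≤ ENNReal.ofReal (b k)) :
    ∀ᵐ ω ∂μ, ∀ᶠ k in atTop, ω ∉ s k := by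
  refine ae_eventually_notMem (ne_top_of_le_ne_top (ENNReal.ofReal_ne_top (r := ∑' k, |b k|)) ?_)
  rw [ENNReal.ofReal_tsum_of_nonneg (fun k => abs_nonneg (b k)) hb.abs]
  exact ENNReal.tsum_le_tsum fun k => (hs k).trans (ENNReal.ofReal_le_ofReal (le_abs_self _))

open Finset in
lemma lintegral_rpow_sum_le {W : ℕ → Ω → ℝ} (hW : ∀ s, AEMeasurable (W s) μ)
    (hW0 : ∀ s ω, 0 ≤ W s ω) {p B : ℝ} (hp : 0 < p) (hp1 : p ≤ 1)
    (hmom : ∀ s, ∫⁻ ω, ENNReal.ofReal (W s ω ^ p) ∂μ ≤ ENNReal.ofReal B) (n : ℕ) :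
    ∫⁻ ω, ENNReal.ofReal ((∑ s ∈ range n, W s ω) ^ p) ∂μ ≤ ENNReal.ofReal (n * B) := by
  calc ∫⁻ ω, ENNReal.ofReal ((∑ s ∈ range n, W s ω) ^ p) ∂μ
      ≤ ∫⁻ ω, ∑ s ∈ range n, ENNReal.ofReal (W s ω ^ p) ∂μ := by
        refine lintegral_mono fun ω => ?_
        rw [← ENNReal.ofReal_sum_of_nonneg fun s _ => Real.rpow_nonneg (hW0 s ω) p]
        exact ENNReal.ofReal_le_ofReal
          (Real.rpow_finset_sum_le_sum_rpow _ (fun s _ => hW0 s ω) hp hp1)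
    _ = ∑ s ∈ range n, ∫⁻ ω, ENNReal.ofReal (W s ω ^ p) ∂μ :=
        lintegral_finsetSum' _ fun s _ =>
          ENNReal.measurable_ofReal.comp_aemeasurable ((hW s).pow_const p)
    _ ≤ ∑ _s ∈ range n, ENNReal.ofReal B := sum_le_sum fun s _ => hmom s
    _ = ENNReal.ofReal (n * B) := by
        rw [sum_const, card_range, nsmul_eq_mul, ENNReal.ofReal_mul n.cast_nonneg,
          ENNReal.ofReal_natCast]

open Finset in
lemma ae_eventually_sum_le_rpow_of_lintegral_rpow_le {W : ℕ → Ω → ℝ}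
    (hW : ∀ s, AEMeasurable (W s) μ) (hW0 : ∀ s ω, 0 ≤ W s ω) {p q B : ℝ} (hp : 0 < p)
    (hp1 : p ≤ 1) (hpq : 1 < p * q)
    (hmom : ∀ s, ∫⁻ ω, ENNReal.ofReal (W s ω ^ p) ∂μ ≤ ENNReal.ofReal B) :
    ∀ᵐ ω ∂μ, ∀ᶠ t : ℕ in atTop, ∑ s ∈ range t, W s ω ≤ (t : ℝ) ^ q := by
  have hq : 0 < q := pos_of_mul_pos_right (one_pos.trans hpq) hp.le
  have hbad : ∀ k : ℕ, μ {ω | (2:ℝ) ^ ((k:ℝ) * q) < ∑ s ∈ range (2 ^ (k + 1)), W s ω}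
      ≤ ENNReal.ofReal (2 * B * ((2:ℝ) ^ (1 - p * q)) ^ k) := by
    intro k
    have hdiv : (2:ℝ) ^ (k + 1) * B / ((2:ℝ) ^ ((k:ℝ) * q)) ^ p
        = 2 * B * ((2:ℝ) ^ (1 - p * q)) ^ k := by
      rw [← Real.rpow_mul zero_le_two, ← Real.rpow_natCast _ k, ← Real.rpow_mul zero_le_two,
        div_eq_mul_inv, ← Real.rpow_neg zero_le_two, pow_succ, ← Real.rpow_natCast,
        show (1 - p * q) * k = (k : ℝ) + -(k * q * p) by ring, Real.rpow_add two_pos]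
      ring
    set ε : ℝ := ((2:ℝ) ^ ((k:ℝ) * q)) ^ p
    have hε : 0 < ε := by positivity
    rw [← hdiv, ENNReal.ofReal_div_of_pos hε,
      ENNReal.le_div_iff_mul_le (.inl (by simpa using hε)) (.inl ENNReal.ofReal_ne_top), mul_comm]
    calc ENNReal.ofReal ε * μ {ω | (2:ℝ) ^ ((k:ℝ) * q) < ∑ s ∈ range (2 ^ (k + 1)), W s ω}
        ≤ ENNReal.ofReal ε *
            μ {ω | ENNReal.ofReal ε ≤ ENNReal.ofReal ((∑ s ∈ range (2 ^ (k + 1)), W s ω) ^ p)} := by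
          refine mul_le_mul_right (measure_mono fun ω hω => ?_) _
          exact ENNReal.ofReal_le_ofReal (Real.rpow_le_rpow (by positivity) (le_of_lt hω) hp.le)
      _ ≤ ∫⁻ ω, ENNReal.ofReal ((∑ s ∈ range (2 ^ (k + 1)), W s ω) ^ p) ∂μ :=
          mul_meas_ge_le_lintegral₀ (ENNReal.measurable_ofReal.comp_aemeasurable
            ((Finset.aemeasurable_fun_sum _ fun s _ => hW s).pow_const p)) _
      _ ≤ ENNReal.ofReal ((2:ℝ) ^ (k + 1) * B) := by
          exact_mod_cast lintegral_rpow_sum_le hW hW0 hp hp1 hmom (2 ^ (k + 1))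
  have hgeom : Summable fun k : ℕ => 2 * B * ((2:ℝ) ^ (1 - p * q)) ^ k :=
    (summable_geometric_of_lt_one (by positivity)
      (Real.rpow_lt_one_of_one_lt_of_neg one_lt_two (by linarith))).mul_left _
  filter_upwards [ae_eventually_notMem_of_le_ofReal hgeom hbad]
    with ω hω
  filter_upwards [(Nat.tendsto_log_atTop one_lt_two).eventually hω, eventually_ne_atTop 0]
    with t ht ht0
  set k := Nat.log 2 t
  calc ∑ s ∈ range t, W s ω ≤ ∑ s ∈ range (2 ^ (k + 1)), W s ω :=
        sum_le_sum_of_subset_of_nonneg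
          (range_subset_range.2 (Nat.lt_pow_succ_log_self one_lt_two t).le)
          fun s _ _ => hW0 s ω
    _ ≤ (2:ℝ) ^ ((k:ℝ) * q) := not_lt.1 ht
    _ = (((2 ^ k : ℕ) : ℝ)) ^ q := by rw [Real.rpow_mul zero_le_two]; norm_cast
    _ ≤ (t : ℝ) ^ q := by gcongr; exact_mod_cast Nat.pow_log_le_self 2 ht0

lemma exists_lintegral_rpow_le_of_meas_lt_le [IsFiniteMeasure μ] {a p x₀ : ℝ} (hp : 0 < p)
    (hpa : p < a) (hx₀ : 0 < x₀) :
    ∃ B : ℝ, ∀ Y : Ω → ℝ, 0 ≤ Y → AEMeasurable Y μ →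
      (∀ x, x₀ ≤ x → μ {ω | x < Y ω} ≤ ENNReal.ofReal (x ^ (-a))) →
      ∫⁻ ω, ENNReal.ofReal (Y ω ^ p) ∂μ ≤ ENNReal.ofReal B := by
  set I₁ := ∫⁻ t in Ioc 0 x₀, ENNReal.ofReal (t ^ (p - 1))
  set I₂ := ∫⁻ t in Ioi x₀, ENNReal.ofReal (t ^ (p - 1 - a))
  have hI₁ : I₁ ≠ ∞ :=
    ((intervalIntegral.intervalIntegrable_rpow' (by linarith : -1 < p - 1)).1.lintegral_lt_top).ne
  have hI₂ : I₂ ≠ ∞ := ((integrableOn_Ioi_rpow_of_lt (by linarith) hx₀).lintegral_lt_top).ne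
  refine ⟨(ENNReal.ofReal p * (μ univ * I₁ + I₂)).toReal, fun Y hY0 hYm htail => ?_⟩
  rw [ENNReal.ofReal_toReal (by finiteness), lintegral_rpow_eq_lintegral_meas_lt_mul μ
    (ae_of_all _ hY0) hYm hp, ← Ioc_union_Ioi_eq_Ioi hx₀.le]
  refine mul_le_mul_right ((lintegral_union_le _ _ _).trans (add_le_add ?_ ?_)) _
  · rw [← lintegral_const_mul' _ _ (measure_ne_top μ univ)]
    exact setLIntegral_mono' measurableSet_Ioc fun t _ =>
      mul_le_mul_left (measure_mono (subset_univ _)) _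
  · refine setLIntegral_mono' measurableSet_Ioi fun t (ht : x₀ < t) => ?_
    have ht0 : 0 < t := hx₀.trans ht
    calc μ {ω | t < Y ω} * ENNReal.ofReal (t ^ (p - 1))
        ≤ ENNReal.ofReal (t ^ (-a)) * ENNReal.ofReal (t ^ (p - 1)) :=
          mul_le_mul_left (htail t ht.le) _
      _ = ENNReal.ofReal (t ^ (p - 1 - a)) := by
          rw [← ENNReal.ofReal_mul (by positivity), ← Real.rpow_add ht0]; ring_nf

lemma setIntegral_condExp_indicator_one (hm : m ≤ m0)
    [IsFiniteMeasure μ] {A S : Set Ω} (hA : MeasurableSet A) (hS : MeasurableSet[m] S) :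
    ∫ ω in S, (μ[A.indicator (fun _ => (1:ℝ)) | m]) ω ∂μ = μ.real (A ∩ S) := by
  rw [setIntegral_condExp hm ((integrable_const (1:ℝ)).indicator hA) hS,
    ← Pi.one_def, integral_indicator_one hA, measureReal_restrict_apply hA]

lemma integral_le_of_condExp_le (hm : m ≤ m0) [IsProbabilityMeasure μ] {f : Ω → ℝ} {c : ℝ}
    (h : ∀ᵐ ω ∂μ, (μ[f | m]) ω ≤ c) :
    ∫ ω, f ω ∂μ ≤ c := by
  rw [← integral_condExp hm]
  simpa using integral_mono_ae integrable_condExp (integrable_const c) h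

lemma measure_le_ofReal_of_condExp_indicator_le (hm : m ≤ m0)
    [IsProbabilityMeasure μ] {A : Set Ω} (hA : MeasurableSet A) {c : ℝ}
    (h : ∀ᵐ ω ∂μ, (μ[A.indicator (fun _ => (1:ℝ)) | m]) ω ≤ c) :
    μ A ≤ ENNReal.ofReal c := by
  rw [← ofReal_measureReal, ← integral_indicator_one hA]
  exact ENNReal.ofReal_le_ofReal (integral_le_of_condExp_le hm h)

lemma measureReal_inter_compl_le_of_le_condExp (hm : m ≤ m0)
    [IsFiniteMeasure μ] {A S : Set Ω} (hA : MeasurableSet A) (hS : MeasurableSet[m] S) {ρ : ℝ}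
    (h : ∀ᵐ ω ∂μ, ρ ≤ (μ[A.indicator (fun _ => (1:ℝ)) | m]) ω) :
    μ.real (S ∩ Aᶜ) ≤ (1 - ρ) * μ.real S := by
  have hlow : ρ * μ.real S ≤ μ.real (A ∩ S) := by
    rw [← setIntegral_condExp_indicator_one hm hA hS, mul_comm, ← smul_eq_mul,
      ← setIntegral_const]
    exact setIntegral_mono_ae (integrableOn_const) integrable_condExp.integrableOn h
  have hsplit := measureReal_inter_add_sdiff (μ := μ) (s := S) hA
  rw [← sdiff_eq]
  rw [inter_comm] at hlow
  linarith

lemma measureReal_iInter_compl_le_of_le_condExp [IsProbabilityMeasure μ] (F : Filtration ℕ m0)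
    {A : ℕ → Set Ω} (hA : ∀ s, MeasurableSet[F (s + 1)] (A s)) {ρ : ℝ} (hρ1 : ρ ≤ 1)
    (h : ∀ s, ∀ᵐ ω ∂μ, ρ ≤ (μ[(A s).indicator (fun _ => (1:ℝ)) | F s]) ω) (a : ℕ) :
    ∀ n, μ.real (⋂ i < n, (A (a + i))ᶜ) ≤ (1 - ρ) ^ n
  | 0 => by simp
  | n + 1 => by
    have hS : MeasurableSet[F (a + n)] (⋂ i < n, (A (a + i))ᶜ) :=
      MeasurableSet.biInter (to_countable _) fun i (hi : i < n) =>
        (F.mono (by omega) _ (hA (a + i))).compl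
    rw [biInter_lt_succ, pow_succ']
    calc μ.real ((⋂ i < n, (A (a + i))ᶜ) ∩ (A (a + n))ᶜ)
        ≤ (1 - ρ) * μ.real (⋂ i < n, (A (a + i))ᶜ) :=
          measureReal_inter_compl_le_of_le_condExp (F.le _) (F.le _ _ (hA _)) hS (h _)
      _ ≤ (1 - ρ) * (1 - ρ) ^ n := by
          gcongr
          exact measureReal_iInter_compl_le_of_le_condExp F hA hρ1 h a n

lemma ae_eventually_exists_mem_of_le_condExp [IsProbabilityMeasure μ] (F : Filtration ℕ m0)
    {A : ℕ → ℕ → Set Ω} (hA : ∀ k s, MeasurableSet[F (s + 1)] (A k s)) {ρ : ℕ → ℝ}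
    (hρ0 : ∀ k, 0 ≤ ρ k) (hρ1 : ∀ k, ρ k ≤ 1)
    (h : ∀ k s, ∀ᵐ ω ∂μ, ρ k ≤ (μ[(A k s).indicator (fun _ => (1:ℝ)) | F s]) ω)
    (a n : ℕ → ℕ) (hsum : Summable fun k => (1 + n k * ρ k)⁻¹) :
    ∀ᵐ ω ∂μ, ∀ᶠ k in atTop, ∃ i < n k, ω ∈ A k (a k + i) := by
  have hbad : ∀ k, μ (⋂ i < n k, (A k (a k + i))ᶜ) ≤ ENNReal.ofReal (1 + n k * ρ k)⁻¹ := by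
    intro k
    rw [← ofReal_measureReal]
    exact ENNReal.ofReal_le_ofReal
      ((measureReal_iInter_compl_le_of_le_condExp F (hA k) (hρ1 k) (h k) (a k) (n k)).trans
        (one_sub_pow_le_inv_one_add_mul (hρ0 k) (hρ1 k) (n k)))
  filter_upwards [ae_eventually_notMem_of_le_ofReal hsum hbad] with ω hω
  filter_upwards [hω] with k hk
  simpa using hk

open Finset in
lemma ae_eventually_sum_le_rpow_of_integral_rpow_le [IsProbabilityMeasure μ] {W : ℕ → Ω → ℝ}
    (hW : ∀ s, AEMeasurable (W s) μ) (hW0 : ∀ s ω, 0 ≤ W s ω) {β C q : ℝ} (hβ : 0 < β)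
    (hq : 1 < q) (hβq : 1 < β * q) (hint : ∀ s, Integrable (fun ω => W s ω ^ β) μ)
    (hmom : ∀ s, ∫ ω, W s ω ^ β ∂μ ≤ C) :
    ∀ᵐ ω ∂μ, ∀ᶠ t : ℕ in atTop, ∑ s ∈ range t, W s ω ≤ (t : ℝ) ^ q := by
  have hp : 0 < min β 1 := lt_min hβ one_pos
  have hpq : 1 < min β 1 * q := by
    rcases min_cases β 1 with ⟨h, -⟩ | ⟨h, -⟩ <;> rw [h] <;> linarith
  refine ae_eventually_sum_le_rpow_of_lintegral_rpow_le hW hW0 hp (min_le_right _ _) hpq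
    (B := 1 + C) fun s => ?_
  have hpow : ∀ ω, W s ω ^ min β 1 ≤ 1 + W s ω ^ β := fun ω => by
    rcases le_total (W s ω) 1 with h | h
    · linarith [Real.rpow_le_one (hW0 s ω) h hp.le, Real.rpow_nonneg (hW0 s ω) β]
    · linarith [Real.rpow_le_rpow_of_exponent_le h (min_le_left β 1)]
  have hint' : Integrable (fun ω => 1 + W s ω ^ β) μ := (integrable_const 1).add (hint s)
  calc ∫⁻ ω, ENNReal.ofReal (W s ω ^ min β 1) ∂μ ≤ ∫⁻ ω, ENNReal.ofReal (1 + W s ω ^ β) ∂μ :=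
        lintegral_mono fun ω => ENNReal.ofReal_le_ofReal (hpow ω)
    _ = ENNReal.ofReal (∫ ω, (1 + W s ω ^ β) ∂μ) :=
        (ofReal_integral_eq_lintegral_ofReal hint'
          (ae_of_all _ fun ω => by have := Real.rpow_nonneg (hW0 s ω) β; positivity)).symm
    _ ≤ ENNReal.ofReal (1 + C) := by
        refine ENNReal.ofReal_le_ofReal ?_
        rw [integral_add (integrable_const 1) (hint s)]
        simpa using hmom s

open Finset in
lemma ae_forall_gt_eventually_sum_le_rpow [IsFiniteMeasure μ] {W : ℕ → Ω → ℝ}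
    (hW : ∀ s, AEMeasurable (W s) μ) (hW0 : ∀ s ω, 0 ≤ W s ω) {α : ℝ} (hα0 : 0 < α)
    (hα1 : α ≤ 1) (htail : ∀ ε, 0 < ε → ∃ x₀ : ℝ, ∀ x, x₀ ≤ x → ∀ s,
      μ {ω | x < W s ω} ≤ ENNReal.ofReal (x ^ (-α + ε))) :
    ∀ᵐ ω ∂μ, ∀ h > 1 / α, ∀ᶠ t : ℕ in atTop, ∑ s ∈ range t, W s ω ≤ (t : ℝ) ^ h := by
  refine ae_forall_gt_of_forall_ae (fun h h' ω hhh' hω => ?_) fun h hh => ?_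
  · filter_upwards [hω, eventually_ge_atTop 1] with t ht ht1
    exact ht.trans (Real.rpow_le_rpow_of_exponent_le (by exact_mod_cast ht1) hhh')
  have h0 : 0 < h := (one_div_pos.2 hα0).trans hh
  obtain ⟨p, hph, hpα⟩ := exists_between ((one_div_lt hα0 h0).1 hh)
  obtain ⟨a, hpa, haα⟩ := exists_between hpα
  have hp0 : 0 < p := (one_div_pos.2 h0).trans hph
  obtain ⟨x₀, hx₀⟩ := htail (α - a) (by linarith)
  obtain ⟨B, hB⟩ := exists_lintegral_rpow_le_of_meas_lt_le (μ := μ) hp0 hpa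
    (lt_max_of_lt_right one_pos : (0:ℝ) < max x₀ 1)
  refine ae_eventually_sum_le_rpow_of_lintegral_rpow_le hW hW0 hp0 (by linarith)
    (by rwa [div_lt_iff₀ h0] at hph) fun s => hB _ (fun ω => hW0 s ω) (hW s) fun x hx => ?_
  simpa [show -α + (α - a) = -a by ring] using hx₀ x ((le_max_left _ _).trans hx) s

lemma ae_eventually_exists_rpow_le [IsProbabilityMeasure μ] (F : Filtration ℕ m0)
    {W : ℕ → Ω → ℝ} (hW : ∀ s, Measurable[F (s + 1)] (W s)) {α r : ℝ} (hα0 : 0 < α)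
    (hr0 : 0 < r) (hrα : r * α < 1) (htail : ∀ ε, 0 < ε → ∃ x₀ : ℝ, ∀ x, x₀ ≤ x → ∀ s, ∀ᵐ ω ∂μ,
      x ^ (-α - ε) ≤ (μ[{ω | x < W s ω}.indicator (fun _ => (1:ℝ)) | F s]) ω) :
    ∀ᵐ ω ∂μ, ∀ᶠ t : ℕ in atTop, ∃ s < t, (t : ℝ) ^ r ≤ W s ω := by
  obtain ⟨a, hαa, har⟩ : ∃ a, α < a ∧ r * a < 1 := by
    obtain ⟨a, h1, h2⟩ := exists_between (show α < 1 / r by rwa [lt_div_iff₀' hr0])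
    exact ⟨a, h1, by rwa [lt_div_iff₀' hr0] at h2⟩
  obtain ⟨x₀, hx₀⟩ := htail (a - α) (by linarith)
  -- The window `[2 ^ k, 2 ^ (k + 1))` serves the times `t ∈ [2 ^ (k + 1), 2 ^ (k + 2))`.
  set y : ℕ → ℝ := fun k => max (max x₀ 1) (((2:ℝ) ^ (k + 2)) ^ r)
  have hy1 : ∀ k, 1 ≤ y k := fun k => (le_max_right _ _).trans (le_max_left _ _)
  have hsum : Summable fun k : ℕ => (1 + 2 ^ k * y k ^ (-a))⁻¹ :=
    summable_inv_one_add_two_pow_mul_rpow_neg (lt_max_of_lt_right one_pos) har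
  have hwin := ae_eventually_exists_mem_of_le_condExp F (A := fun k s => {ω | y k < W s ω})
    (ρ := fun k => y k ^ (-a)) (fun k s => measurableSet_lt measurable_const (hW s))
    (fun k => Real.rpow_nonneg (zero_le_one.trans (hy1 k)) _)
    (fun k => Real.rpow_le_one_of_one_le_of_nonpos (hy1 k) (by linarith))
    (fun k s => by
      simpa [show -α - (a - α) = -a by ring] using
        hx₀ (y k) ((le_max_left _ _).trans (le_max_left _ _)) s)
    (fun k => 2 ^ k) (fun k => 2 ^ k) (by exact_mod_cast hsum)
  filter_upwards [hwin] with ω hω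
  filter_upwards [((tendsto_sub_atTop_nat 1).comp (Nat.tendsto_log_atTop one_lt_two)).eventually hω,
    eventually_ge_atTop 2] with t ⟨i, hi, hiW⟩ ht2
  set k := Nat.log 2 t - 1
  have hk : k + 1 = Nat.log 2 t := by
    have := Nat.log_pos one_lt_two ht2
    omega
  refine ⟨2 ^ k + i, ?_, ?_⟩
  · have hi' : i < 2 ^ k := hi
    calc 2 ^ k + i < 2 ^ (k + 1) := by rw [pow_succ]; omega
      _ ≤ t := hk ▸ Nat.pow_log_le_self 2 (by omega)
  · calc (t : ℝ) ^ r ≤ ((2:ℝ) ^ (k + 2)) ^ r := by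
          refine Real.rpow_le_rpow (by positivity) ?_ hr0.le
          exact_mod_cast (hk ▸ Nat.lt_pow_succ_log_self one_lt_two t).le
      _ ≤ y k := le_max_right _ _
      _ ≤ W (2 ^ k + i) ω := le_of_lt hiW

lemma ae_forall_lt_eventually_exists_rpow_le [IsProbabilityMeasure μ] (F : Filtration ℕ m0)
    {W : ℕ → Ω → ℝ} (hW : ∀ s, Measurable[F (s + 1)] (W s)) {α : ℝ} (hα0 : 0 < α)
    (htail : ∀ ε, 0 < ε → ∃ x₀ : ℝ, ∀ x, x₀ ≤ x → ∀ s, ∀ᵐ ω ∂μ,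
      x ^ (-α - ε) ≤ (μ[{ω | x < W s ω}.indicator (fun _ => (1:ℝ)) | F s]) ω) :
    ∀ᵐ ω ∂μ, ∀ r < 1 / α, ∀ᶠ t : ℕ in atTop, ∃ s < t, (t : ℝ) ^ r ≤ W s ω := by
  refine ae_forall_lt_of_forall_ae (one_div_pos.2 hα0) (fun r r' ω hrr' hω => ?_)
    fun r hr hrα => ae_eventually_exists_rpow_le F hW hα0 hr (by rwa [lt_div_iff₀ hα0] at hrα) htail
  filter_upwards [hω, eventually_ge_atTop 1] with t ⟨s, hst, hs⟩ ht1
  exact ⟨s, hst, (Real.rpow_le_rpow_of_exponent_le (by exact_mod_cast ht1) hrr').trans hs⟩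

/-- Corollary 1 of the paper: if the negative parts have a bounded conditional
`β`-moment and the conditional upper tail of `Δ_t⁺` has exponent `α` uniformly
in `t` and `ω`, then `(log X_t)/(log t) → 1/α` almost surely. -/
theorem stmt12
    {Ω : Type*} {m0 : MeasurableSpace Ω} {μ : Measure Ω} [IsProbabilityMeasure μ]
    (F : Filtration ℕ m0) (X : ℕ → Ω → ℝ) (hadapted : Adapted F X)
    (hX0 : ∀ ω, X 0 ω = 0)
    (α β C : ℝ) (hα : α ∈ Set.Ioo (0:ℝ) 1) (hβ : α < β)
    (hnegint : ∀ t, Integrable (fun ω => (max (-(X (t + 1) ω - X t ω)) 0) ^ β) μ)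
    (hneg : ∀ t, ∀ᵐ ω ∂μ,
      (μ[fun ω' => (max (-(X (t + 1) ω' - X t ω')) 0) ^ β|F t]) ω ≤ C)
    (htail : ∀ ε, 0 < ε → ∃ x₀ : ℝ, ∀ x, x₀ ≤ x → ∀ t, ∀ᵐ ω ∂μ,
      x ^ (-α - ε) ≤ (μ[Set.indicator {ω' | x < max (X (t + 1) ω' - X t ω') 0}
        (fun _ => (1:ℝ))|F t]) ω ∧
      (μ[Set.indicator {ω' | x < max (X (t + 1) ω' - X t ω') 0}
        (fun _ => (1:ℝ))|F t]) ω ≤ x ^ (-α + ε)) :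
    ∀ᵐ ω ∂μ, Tendsto (fun t : ℕ => Real.log (X t ω) / Real.log t) atTop
      (nhds (1/α)) := by
  obtain ⟨hα0, hα1⟩ := hα
  have hX : ∀ t ω, X t ω = ∑ s ∈ Finset.range t, (X (s + 1) ω - X s ω) := fun t ω => by
    rw [Finset.sum_range_sub (fun s => X s ω), hX0, sub_zero]
  have hΔ : ∀ t, Measurable[F (t + 1)] (fun ω => X (t + 1) ω - X t ω) := fun t =>
    (hadapted (t + 1)).sub ((hadapted t).mono (F.mono t.le_succ) le_rfl)
  have hΔ' : ∀ t, Measurable (fun ω => X (t + 1) ω - X t ω) := fun t =>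
    (hΔ t).mono (F.le _) le_rfl
  obtain ⟨q, hq, hqα⟩ := exists_between
    (max_lt (one_lt_one_div hα0 hα1) (one_div_lt_one_div_of_lt hα0 hβ))
  have hneg' := ae_eventually_sum_le_rpow_of_integral_rpow_le
    (W := fun t ω => (X (t + 1) ω - X t ω)⁻)
    (fun t => ((hΔ' t).neg.max measurable_const).aemeasurable)
    (fun _ _ => negPart_nonneg _) (hα0.trans hβ) ((le_max_left _ _).trans_lt hq)
    (by rw [← div_lt_iff₀' (hα0.trans hβ)]; exact (le_max_right _ _).trans_lt hq) hnegint
    fun t => integral_le_of_condExp_le (F.le t) (hneg t)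
  have hup := ae_forall_gt_eventually_sum_le_rpow (W := fun t ω => (X (t + 1) ω - X t ω)⁺)
    (fun t => ((hΔ' t).max measurable_const).aemeasurable)
    (fun _ _ => posPart_nonneg _) hα0 hα1.le fun ε hε => (htail ε hε).imp fun x₀ h x hx t =>
      measure_le_ofReal_of_condExp_indicator_le (F.le t)
        (measurableSet_lt measurable_const ((hΔ' t).max measurable_const))
        ((h x hx t).mono fun _ h => h.2)
  have hjump := ae_forall_lt_eventually_exists_rpow_le F
    (W := fun t ω => (X (t + 1) ω - X t ω)⁺) (fun t => (hΔ t).max measurable_const) hα0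
    fun ε hε => (htail ε hε).imp fun x₀ h x hx t => (h x hx t).mono fun _ h => h.1
  filter_upwards [hneg', hup, hjump] with ω hN hU hJ
  exact (tendsto_log_sum_div_log hqα hN hJ hU).congr fun t => by rw [hX]
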